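/- Let d ≥ 1, p ≥ 0, k ≥ 0, and let I_n = [x_n, x_{n+1}] with h_n := x_{n+1} − x_n > 0. Let v : I_n → ℝ^d have all components polynomial of degree ≤ p+1 and suppose ∫_{I_n} v(x) · φ(x) dx = 0 for every ℝ^d-valued φ whose components are polynomials of degree ≤ p−1. Then the k-th spatial derivative of v satisfies ‖∂ₓᵏ v‖_{L∞(I_n)} ≤ 2^{k−1} h_n^{−k} ( ‖l_p^{(k)}‖_{L∞(−1,1)} + ‖l_{p+1}^{(k)}‖_{L∞(−1,1)} ) ( |v(x_n)| + |v(x_{n+1})| ), where |·| is the Euclidean norm and l_p, l_{p+1} are the Legendre polynomials on (−1,1) normalized by l_k(1) = 1. -/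

import Mathlib

/-!
On the reference cell `[-1, 1]`, a polynomial of degree `≤ p + 1` orthogonal to `ℙ_{p-1}` lies
in the span of `l_p` and `l_{p+1}`, because each `l_m` is orthogonal to all polynomials of lower
degree. Writing it as `α l_p + β l_{p+1}`, its endpoint values are `α + β` at `1` and
`(-1)^p (α - β)` at `-1`, so `|α|, |β| ≤ (|v(-1)| + |v(1)|) / 2`. Differentiating `k` times
bounds `v⁽ᵏ⁾` on `[-1, 1]`, and the affine pull-back to `I_n` contributes the factor `(2 / h_n)^k`.
-/

open Polynomial MeasureTheory

namespace Polynomial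

theorem iterate_derivative_comp_C_mul_X_add_C {R : Type*} [CommSemiring R] (q : R[X]) (a b : R)
    (k : ℕ) : derivative^[k] (q.comp (C a * X + C b)) =
      C (a ^ k) * (derivative^[k] q).comp (C a * X + C b) := by
  induction k with
  | zero => simp
  | succ k ih =>
    rw [Function.iterate_succ_apply', ih, derivative_C_mul, derivative_comp,
      Function.iterate_succ_apply']
    simp only [derivative_add, derivative_C_mul_X, derivative_C, add_zero, pow_succ, C_mul]
    ring

theorem degree_sub_C_mul_lt {K : Type*} [Field K] {q l : K[X]} {m : ℕ} (hl : l.natDegree = m)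
    (hl0 : l ≠ 0) (hq : q.natDegree ≤ m) :
    (q - C (q.coeff m / l.leadingCoeff) * l).degree < m := by
  refine (degree_lt_iff_coeff_zero _ _).2 fun j hj => ?_
  rw [coeff_sub, coeff_C_mul]
  rcases hj.eq_or_lt with rfl | hj
  · rw [← hl, ← leadingCoeff, div_mul_cancel₀ _ (leadingCoeff_ne_zero.2 hl0), sub_self]
  · rw [coeff_eq_zero_of_natDegree_lt (hq.trans_lt hj),
      coeff_eq_zero_of_natDegree_lt (hl.trans_lt hj), mul_zero, sub_zero]

theorem degree_comp_C_mul_X_add_C {K : Type*} [Field K] (q : K[X]) {a : K} (ha : a ≠ 0) (b : K) :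
    (q.comp (C a * X + C b)).degree = q.degree := by
  rw [degree_comp (by rw [degree_linear ha]; exact zero_lt_one), degree_linear ha, mul_one]

theorem intervalIntegrable_eval_mul_eval (f g : ℝ[X]) (a b : ℝ) :
    IntervalIntegrable (fun x => f.eval x * g.eval x) volume a b :=
  (f.continuous.mul g.continuous).intervalIntegrable a b

theorem eq_zero_of_integral_eval_mul_self_eq_zero {r : ℝ[X]} {a b : ℝ} (hab : a < b)
    (h : ∫ x in a..b, r.eval x * r.eval x = 0) : r = 0 := by
  by_contra hr
  have hsupp : Set.Ioc a b \ {x | r.IsRoot x} ⊆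
      Function.support (fun x => r.eval x * r.eval x) ∩ Set.Ioc a b :=
    fun x ⟨hx, hroot⟩ => ⟨mul_self_ne_zero.2 hroot, hx⟩
  have hpos : 0 < ∫ x in a..b, r.eval x * r.eval x := by
    refine (intervalIntegral.integral_pos_iff_support_of_nonneg_ae
      (.of_forall fun x => mul_self_nonneg _) (r.intervalIntegrable_eval_mul_eval r a b)).2
      ⟨hab, ?_⟩
    refine lt_of_lt_of_le ?_ (measure_mono hsupp)
    rw [measure_sdiff_null ((finite_setOfPred_isRoot hr).measure_zero _), Real.volume_Ioc]
    simpa using hab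
  exact hpos.ne' h

theorem integral_eval_sub_C_mul_mul (f g ψ : ℝ[X]) (c a b : ℝ) :
    ∫ x in a..b, (f - C c * g).eval x * ψ.eval x =
      (∫ x in a..b, f.eval x * ψ.eval x) - c * ∫ x in a..b, g.eval x * ψ.eval x := by
  rw [← intervalIntegral.integral_const_mul, ← intervalIntegral.integral_sub
    (f.intervalIntegrable_eval_mul_eval ψ a b)
    ((g.intervalIntegrable_eval_mul_eval ψ a b).const_mul c)]
  simp only [eval_sub, eval_mul, eval_C, sub_mul, mul_assoc]

end Polynomial

theorem EuclideanSpace.norm_toLp_eq_sqrt_sum_sq {ι : Type*} [Fintype ι] (f : ι → ℝ) :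
    ‖WithLp.toLp 2 f‖ = √(∑ i, f i ^ 2) := by
  simp [EuclideanSpace.norm_eq]

theorem IsCompact.le_biSup_of_continuousOn {X : Type*} [TopologicalSpace X] {K : Set X}
    (hK : IsCompact K) {f : X → ℝ} (hf : ContinuousOn f K) {x : X} (hx : x ∈ K) :
    f x ≤ ⨆ y ∈ K, f y :=
  le_ciSup₂ (f := fun y (_ : y ∈ K) => f y) ((hK.bddAbove_image hf).mono <| by
    rintro _ ⟨_, ⟨y, rfl⟩, ⟨hy, rfl⟩⟩
    exact ⟨y, hy, rfl⟩) x hx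

theorem norm_smul_add_smul_le_of_eq_add_of_eq_smul_sub {E : Type*} [SeminormedAddCommGroup E]
    [NormedSpace ℝ E] {u v w₀ w₁ : E} {ε : ℝ} (hε : |ε| = 1) (h₀ : w₀ = ε • (u - v))
    (h₁ : w₁ = u + v) (s t : ℝ) :
    ‖s • u + t • v‖ ≤ (|s| + |t|) * ((‖w₀‖ + ‖w₁‖) / 2) := by
  have hεw₀ : ε • w₀ = u - v := by
    rw [h₀, smul_smul, ← sq, ← sq_abs, hε, one_pow, one_smul]
  have hεw₀_norm : ‖ε • w₀‖ = ‖w₀‖ := by rw [norm_smul, Real.norm_eq_abs, hε, one_mul]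
  have hu : ‖u‖ ≤ (‖w₀‖ + ‖w₁‖) / 2 := by
    rw [show u = (2 : ℝ)⁻¹ • (w₁ + ε • w₀) by rw [hεw₀, h₁]; module, norm_smul,
      Real.norm_of_nonneg (by norm_num)]
    linarith [norm_add_le w₁ (ε • w₀)]
  have hv : ‖v‖ ≤ (‖w₀‖ + ‖w₁‖) / 2 := by
    rw [show v = (2 : ℝ)⁻¹ • (w₁ - ε • w₀) by rw [hεw₀, h₁]; module, norm_smul,
      Real.norm_of_nonneg (by norm_num)]
    linarith [norm_sub_le w₁ (ε • w₀)]
  calc ‖s • u + t • v‖ ≤ |s| * ‖u‖ + |t| * ‖v‖ := by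
        simpa only [norm_smul, Real.norm_eq_abs] using norm_add_le (s • u) (t • v)
    _ ≤ |s| * ((‖w₀‖ + ‖w₁‖) / 2) + |t| * ((‖w₀‖ + ‖w₁‖) / 2) := by gcongr
    _ = (|s| + |t|) * ((‖w₀‖ + ‖w₁‖) / 2) := by ring

/-- `q ⊥ ℙ_{n-1}` in `L²(a, b)`. -/
def IsOrthogonalToDegreeLT (a b : ℝ) (n : ℕ) (q : ℝ[X]) : Prop :=
  ∀ ψ : ℝ[X], ψ.degree < n → ∫ x in a..b, q.eval x * ψ.eval x = 0

namespace IsOrthogonalToDegreeLT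

variable {a b : ℝ} {n : ℕ} {q : ℝ[X]}

theorem mono (hq : IsOrthogonalToDegreeLT a b n q) {m : ℕ} (hmn : m ≤ n) :
    IsOrthogonalToDegreeLT a b m q :=
  fun ψ hψ => hq ψ (hψ.trans_le (by exact_mod_cast hmn))

theorem sub_C_mul (hq : IsOrthogonalToDegreeLT a b n q) {g : ℝ[X]}
    (hg : IsOrthogonalToDegreeLT a b n g) (c : ℝ) :
    IsOrthogonalToDegreeLT a b n (q - C c * g) := fun ψ hψ => by
  rw [integral_eval_sub_C_mul_mul, hq ψ hψ, hg ψ hψ, mul_zero, sub_zero]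

theorem eq_zero_of_degree_lt (hab : a < b) (hq : IsOrthogonalToDegreeLT a b n q)
    (hdeg : q.degree < n) : q = 0 :=
  eq_zero_of_integral_eval_mul_self_eq_zero hab (hq q hdeg)

theorem comp_neg_X (hq : IsOrthogonalToDegreeLT a b n q) :
    IsOrthogonalToDegreeLT (-b) (-a) n (q.comp (-X)) := fun ψ hψ => by
  have := intervalIntegral.integral_comp_neg (a := -b) (b := -a)
    fun x => q.eval x * (ψ.comp (-X)).eval x
  simp only [neg_neg, eval_comp, eval_neg, eval_X] at this hq ⊢
  rw [this]
  simpa only [eval_comp, eval_neg, eval_X] using hq (ψ.comp (-X)) (by rwa [degree_comp_neg_X])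

theorem comp_C_mul_X_add_C {c : ℝ} (hc : c ≠ 0) (e : ℝ)
    (hq : IsOrthogonalToDegreeLT (c * a + e) (c * b + e) n q) :
    IsOrthogonalToDegreeLT a b n (q.comp (C c * X + C e)) := fun ψ hψ => by
  have hψ' : (ψ.comp (C c⁻¹ * X + C (-(e / c)))).degree < n := by
    rwa [degree_comp_C_mul_X_add_C _ (inv_ne_zero hc)]
  set F : ℝ → ℝ := fun y => q.eval y * (ψ.comp (C c⁻¹ * X + C (-(e / c)))).eval y
  calc ∫ x in a..b, (q.comp (C c * X + C e)).eval x * ψ.eval x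
      = ∫ x in a..b, F (c * x + e) := by
        congr 1; ext x
        simp only [F, eval_comp, eval_add, eval_mul, eval_C, eval_X]
        rw [show c⁻¹ * (c * x + e) + -(e / c) = x by field_simp; ring]
    _ = c⁻¹ • ∫ y in c * a + e..c * b + e, F y := intervalIntegral.integral_comp_mul_add F hc e
    _ = 0 := by rw [hq _ hψ', smul_zero]

end IsOrthogonalToDegreeLT

theorem isOrthogonalToDegreeLT_apply_of_integral_sum {ι : Type*} [Fintype ι] [DecidableEq ι]
    {a b : ℝ} {n : ℕ} {V : ι → ℝ[X]}
    (hV : ∀ φ : ι → ℝ[X], (∀ i, (φ i).degree < n) →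
      ∫ x in a..b, ∑ i, (V i).eval x * (φ i).eval x = 0) (i : ι) :
    IsOrthogonalToDegreeLT a b n (V i) := fun ψ hψ => by
  have hφ : ∀ j, (Pi.single (M := fun _ => ℝ[X]) i ψ j).degree < n := fun j => by
    rcases eq_or_ne j i with rfl | hj
    · simpa using hψ
    · simp [hj]
  simpa [Pi.single_apply, apply_ite (eval _)] using hV (Pi.single i ψ) hφ

section OrthogonalFamily

variable {l : ℕ → ℝ[X]} {a b : ℝ}

theorem isOrthogonalToDegreeLT_of_pairwise_orthogonal (hdeg : ∀ k, (l k).natDegree = k)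
    (hl0 : ∀ k, l k ≠ 0) (horth : ∀ j k, j ≠ k → ∫ x in a..b, (l j).eval x * (l k).eval x = 0)
    (m : ℕ) : IsOrthogonalToDegreeLT a b m (l m) := by
  -- Peel off leading terms: `ψ - c • l n` has lower degree, and `l n ⊥ l j` for `n < j`.
  suffices h : ∀ n : ℕ, ∀ ψ : ℝ[X], ψ.degree < n → ∀ j : ℕ, n ≤ j →
      ∫ x in a..b, ψ.eval x * (l j).eval x = 0 by
    intro ψ hψ
    simpa only [mul_comm] using h m ψ hψ m le_rfl
  intro n
  induction n with
  | zero => intro ψ hψ j _; simp [show ψ = 0 by simpa using hψ]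
  | succ n ih =>
    intro ψ hψ j hj
    have hψn : ψ.natDegree ≤ n := natDegree_le_iff_degree_le.2 (Order.le_of_lt_succ hψ)
    have hlow := ih _ (degree_sub_C_mul_lt (hdeg n) (hl0 n) hψn) j (by omega)
    rwa [integral_eval_sub_C_mul_mul, horth n j (by omega), mul_zero, sub_zero] at hlow

theorem exists_eq_C_mul_add_C_mul_of_isOrthogonalToDegreeLT (hab : a < b)
    (hdeg : ∀ k, (l k).natDegree = k) (hl0 : ∀ k, l k ≠ 0)
    (horth : ∀ j k, j ≠ k → ∫ x in a..b, (l j).eval x * (l k).eval x = 0) {p : ℕ} {q : ℝ[X]}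
    (hq : q.natDegree ≤ p + 1) (hqorth : IsOrthogonalToDegreeLT a b p q) :
    ∃ α β : ℝ, q = C α * l p + C β * l (p + 1) := by
  have hl := isOrthogonalToDegreeLT_of_pairwise_orthogonal hdeg hl0 horth
  set β := q.coeff (p + 1) / (l (p + 1)).leadingCoeff
  have hq₁ : (q - C β * l (p + 1)).natDegree ≤ p := natDegree_le_iff_degree_le.2
    (Order.le_of_lt_succ (degree_sub_C_mul_lt (hdeg (p + 1)) (hl0 (p + 1)) hq))
  set α := (q - C β * l (p + 1)).coeff p / (l p).leadingCoeff
  have hr := (hqorth.sub_C_mul ((hl (p + 1)).mono p.le_succ) β).sub_C_mul (hl p) α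
  refine ⟨α, β, ?_⟩
  linear_combination hr.eq_zero_of_degree_lt hab (degree_sub_C_mul_lt (hdeg p) (hl0 p) hq₁)

theorem eval_neg_one_eq_neg_one_pow (hdeg : ∀ k, (l k).natDegree = k)
    (horth : ∀ j k, j ≠ k → ∫ x in (-1 : ℝ)..1, (l j).eval x * (l k).eval x = 0)
    (hnorm : ∀ k, (l k).eval 1 = 1) (p : ℕ) : (l p).eval (-1) = (-1) ^ p := by
  have hl0 : ∀ k, l k ≠ 0 := fun k h => by simpa [h] using hnorm k
  -- `l_p(-x)` has degree `p` and is orthogonal to `ℙ_{p-1}`, so it is a multiple of `l_p`;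
  -- comparing leading coefficients, the multiple is `(-1)^p`.
  have hflip : IsOrthogonalToDegreeLT (-1) 1 p ((l p).comp (-X)) := by
    simpa using (isOrthogonalToDegreeLT_of_pairwise_orthogonal hdeg hl0 horth p).comp_neg_X
  have hnat : ((l p).comp (-X)).natDegree = p := by
    rw [natDegree_comp, natDegree_neg, natDegree_X, mul_one, hdeg]
  have hc : ((l p).comp (-X)).coeff p / (l p).leadingCoeff = (-1) ^ p := by
    have h := comp_neg_X_leadingCoeff_eq (l p)
    rw [leadingCoeff, hnat, hdeg] at h
    rw [h, mul_div_cancel_right₀ _ (leadingCoeff_ne_zero.2 (hl0 p))]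
  have hr := (hflip.sub_C_mul (isOrthogonalToDegreeLT_of_pairwise_orthogonal hdeg hl0 horth p) _)
    |>.eq_zero_of_degree_lt (by norm_num) (degree_sub_C_mul_lt (hdeg p) (hl0 p) hnat.le)
  have := congrArg (eval 1) hr
  simp only [hc, eval_sub, eval_comp, eval_neg, eval_X, eval_mul, eval_C, hnorm, mul_one,
    eval_zero] at this
  linear_combination this

theorem norm_iterate_derivative_le_of_isOrthogonalToDegreeLT {ι : Type*} [Fintype ι]
    (hdeg : ∀ k, (l k).natDegree = k)
    (horth : ∀ j k, j ≠ k → ∫ x in (-1 : ℝ)..1, (l j).eval x * (l k).eval x = 0)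
    (hnorm : ∀ k, (l k).eval 1 = 1) {p : ℕ} {W : ι → ℝ[X]} (hW : ∀ i, (W i).natDegree ≤ p + 1)
    (hWorth : ∀ i, IsOrthogonalToDegreeLT (-1) 1 p (W i)) (k : ℕ) {s : ℝ}
    (hs : s ∈ Set.Icc (-1 : ℝ) 1) :
    ‖(WithLp.toLp 2 fun i => (derivative^[k] (W i)).eval s : EuclideanSpace ℝ ι)‖ ≤
      ((⨆ t ∈ Set.Icc (-1 : ℝ) 1, |(derivative^[k] (l p)).eval t|) +
        ⨆ t ∈ Set.Icc (-1 : ℝ) 1, |(derivative^[k] (l (p + 1))).eval t|) *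
      ((‖(WithLp.toLp 2 fun i => (W i).eval (-1) : EuclideanSpace ℝ ι)‖ +
        ‖(WithLp.toLp 2 fun i => (W i).eval 1 : EuclideanSpace ℝ ι)‖) / 2) := by
  have hl0 : ∀ k, l k ≠ 0 := fun k h => by simpa [h] using hnorm k
  choose α β hαβ using fun i => exists_eq_C_mul_add_C_mul_of_isOrthogonalToDegreeLT
    (by norm_num) hdeg hl0 horth (hW i) (hWorth i)
  set u : EuclideanSpace ℝ ι := WithLp.toLp 2 α
  set v : EuclideanSpace ℝ ι := WithLp.toLp 2 β
  have hderiv : (WithLp.toLp 2 fun i => (derivative^[k] (W i)).eval s : EuclideanSpace ℝ ι) =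
      (derivative^[k] (l p)).eval s • u + (derivative^[k] (l (p + 1))).eval s • v := by
    ext i
    simp only [u, v, hαβ, iterate_map_add, iterate_derivative_C_mul, eval_add, eval_mul, eval_C,
      PiLp.add_apply, PiLp.smul_apply, smul_eq_mul]
    ring
  have hsup : ∀ q : ℝ[X], |q.eval s| ≤ ⨆ t ∈ Set.Icc (-1 : ℝ) 1, |q.eval t| := fun q =>
    isCompact_Icc.le_biSup_of_continuousOn (f := fun t => |q.eval t|)
      q.continuous.abs.continuousOn hs
  rw [hderiv]
  refine (norm_smul_add_smul_le_of_eq_add_of_eq_smul_sub (ε := (-1) ^ p) (by simp) ?_ ?_ _ _).trans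
    (by gcongr; exacts [hsup _, hsup _])
  · ext i
    simp only [u, v, hαβ, eval_add, eval_mul, eval_C, eval_neg_one_eq_neg_one_pow hdeg horth hnorm,
      PiLp.smul_apply, PiLp.sub_apply, smul_eq_mul]
    ring
  · ext i
    simp [u, v, hαβ, hnorm]

end OrthogonalFamily

theorem cell_orthogonal_derivative_bound_general
    (l : ℕ → Polynomial ℝ)
    (hdeg : ∀ k, (l k).natDegree = k)
    (horth : ∀ j k, j ≠ k → ∫ x in (-1:ℝ)..1, (l j).eval x * (l k).eval x = 0)
    (hnorm : ∀ k, (l k).eval 1 = 1)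
    (d : ℕ) (p k : ℕ)
    (xn xnp : ℝ) (hx : xn < xnp)
    (V : Fin d → Polynomial ℝ) (hV : ∀ i, (V i).natDegree ≤ p + 1)
    (horthV : ∀ φ : Fin d → Polynomial ℝ, (∀ i, (φ i).degree < (p : ℕ)) →
      (∫ x in xn..xnp, ∑ i, (V i).eval x * (φ i).eval x) = 0) :
    ∀ x ∈ Set.Icc xn xnp,
      Real.sqrt (∑ i, ((Polynomial.derivative^[k] (V i)).eval x) ^ 2) ≤
        (2 : ℝ) ^ ((k : ℤ) - 1) * ((xnp - xn) ^ (k : ℤ))⁻¹ *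
          ((⨆ s ∈ Set.Icc (-1:ℝ) 1, |(Polynomial.derivative^[k] (l p)).eval s|) +
            ⨆ s ∈ Set.Icc (-1:ℝ) 1, |(Polynomial.derivative^[k] (l (p + 1))).eval s|) *
          (Real.sqrt (∑ i, ((V i).eval xn) ^ 2) + Real.sqrt (∑ i, ((V i).eval xnp) ^ 2)) := by
  intro x hx_mem
  obtain ⟨c, e, hc, hxn, hxnp, hcx⟩ : ∃ c e : ℝ, 0 < c ∧ c * -1 + e = xn ∧ c * 1 + e = xnp ∧
      c = (xnp - xn) / 2 := ⟨_, (xn + xnp) / 2, by linarith, by ring, by ring, rfl⟩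
  have hs : (x - e) / c ∈ Set.Icc (-1 : ℝ) 1 := by
    rw [Set.mem_Icc, le_div_iff₀ hc, div_le_iff₀ hc]
    constructor <;> linarith [hx_mem.1, hx_mem.2]
  have hbound := norm_iterate_derivative_le_of_isOrthogonalToDegreeLT hdeg horth hnorm
    (W := fun i => (V i).comp (C c * X + C e))
    (fun i => by rw [natDegree_comp, natDegree_linear hc.ne', mul_one]; exact hV i)
    (fun i => IsOrthogonalToDegreeLT.comp_C_mul_X_add_C hc.ne' e <| by
      rw [hxn, hxnp]; exact isOrthogonalToDegreeLT_apply_of_integral_sum horthV i) k hs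
  have hpull : (WithLp.toLp 2 fun i => (derivative^[k] ((V i).comp (C c * X + C e))).eval
      ((x - e) / c) : EuclideanSpace ℝ (Fin d)) =
      c ^ k • WithLp.toLp 2 fun i => (derivative^[k] (V i)).eval x := by
    ext i
    simp [iterate_derivative_comp_C_mul_X_add_C, mul_div_cancel₀ _ hc.ne']
  simp only [hpull, eval_comp, eval_add, eval_mul, eval_C, eval_X, hxn, hxnp, norm_smul,
    norm_pow, Real.norm_of_nonneg hc.le] at hbound
  simp only [← EuclideanSpace.norm_toLp_eq_sqrt_sum_sq]
  refine ((le_div_iff₀' (by positivity)).2 hbound).trans_eq ?_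
  rw [hcx, div_pow, zpow_sub₀ two_ne_zero, zpow_natCast, zpow_natCast, zpow_one]
  field_simp

/-- **Derivative bound for an almost-orthogonal cell polynomial** (the bound underlying
(5.19) of the paper): an `ℝ^d`-valued polynomial `v` of degree `≤ p+1` on the cell
`I_n = [x_n, x_{n+1}]` of length `h_n` that is `L₂(I_n)`-orthogonal to all polynomials of
degree `≤ p-1` (expressed as `degree < p`) satisfies
`‖∂ₓᵏ v‖_{L∞(I_n)} ≤ 2^{k-1} h_n^{-k} (‖l_p^{(k)}‖_{L∞(-1,1)} + ‖l_{p+1}^{(k)}‖_{L∞(-1,1)})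
(|v(x_n)| + |v(x_{n+1})|)`. Here `l k` is characterized as the `k`-th Legendre polynomial
on `(-1,1)` normalized by `l_k(1) = 1`, and `|·|` is the Euclidean norm. -/
theorem cell_orthogonal_derivative_bound
    (l : ℕ → Polynomial ℝ)
    (hdeg : ∀ k, (l k).natDegree = k)
    (horth : ∀ j k, j ≠ k → ∫ x in (-1:ℝ)..1, (l j).eval x * (l k).eval x = 0)
    (hnorm : ∀ k, (l k).eval 1 = 1)
    (d : ℕ) (hd : 1 ≤ d) (p k : ℕ)
    (xn xnp : ℝ) (hx : xn < xnp)
    (V : Fin d → Polynomial ℝ) (hV : ∀ i, (V i).natDegree ≤ p + 1)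
    (horthV : ∀ φ : Fin d → Polynomial ℝ, (∀ i, (φ i).degree < (p : ℕ)) →
      (∫ x in xn..xnp, ∑ i, (V i).eval x * (φ i).eval x) = 0) :
    ∀ x ∈ Set.Icc xn xnp,
      Real.sqrt (∑ i, ((Polynomial.derivative^[k] (V i)).eval x) ^ 2) ≤
        (2 : ℝ) ^ ((k : ℤ) - 1) * ((xnp - xn) ^ (k : ℤ))⁻¹ *
          ((⨆ s ∈ Set.Icc (-1:ℝ) 1, |(Polynomial.derivative^[k] (l p)).eval s|) +
            ⨆ s ∈ Set.Icc (-1:ℝ) 1, |(Polynomial.derivative^[k] (l (p + 1))).eval s|) *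
          (Real.sqrt (∑ i, ((V i).eval xn) ^ 2) + Real.sqrt (∑ i, ((V i).eval xnp) ^ 2)) :=
  cell_orthogonal_derivative_bound_general l hdeg horth hnorm d p k xn xnp hx V hV horthV
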